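/- arXiv:1208.2748 — 4 statements merged into one kernel-verified Lean document; each statement's English description precedes it below -/
import Mathlib

section
/- Soundness of mixed simulation for the standard inductive semantics (fixpoint-free fragment): if ⟨K,s_K⟩ ≤_mix ⟨M,s_M⟩ where K is a Kripke Structure viewed as a GTS and M is a GTS, then for every closed fixpoint-free modal formula φ (built from ⊤, ⊥, literals, ∧, ∨, ◇, □): if s_M is in the SIS truth set of φ in M, then s_K satisfies φ in K, and if s_M is in the SIS falsity set of φ in M, then s_K does not satisfy φ in K. -/
set_option autoImplicit true
set_option maxHeartbeats 800000

structure GTS (σ : Type) (α : Type) where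
  init : Set σ
  may : σ → σ → Prop
  must : σ → Set σ → Prop
  labT : σ → α → Prop
  labF : σ → α → Prop
  must_may : ∀ s A, must s A → ∀ t ∈ A, may s t
  lab_con : ∀ s p, ¬ (labT s p ∧ labF s p)

/-- `H` is a mixed simulation from `M₁` to `M₂`. -/
def IsMixedSim (M₁ : GTS σ₁ α) (M₂ : GTS σ₂ α) (H : σ₁ → σ₂ → Prop) : Prop :=
  ∀ s₁ s₂, H s₁ s₂ →
    ((∀ p, M₂.labT s₂ p → M₁.labT s₁ p) ∧ (∀ p, M₂.labF s₂ p → M₁.labF s₁ p)) ∧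
    (∀ s₁', M₁.may s₁ s₁' → ∃ s₂', M₂.may s₂ s₂' ∧ H s₁' s₂') ∧
    (∀ A₂, M₂.must s₂ A₂ → ∃ A₁, M₁.must s₁ A₁ ∧ ∀ s₁' ∈ A₁, ∃ s₂' ∈ A₂, H s₁' s₂')

/-- `⟨M₁,s₁⟩ ≤_mix ⟨M₂,s₂⟩`. -/
def MixLe (M₁ : GTS σ₁ α) (s₁ : σ₁) (M₂ : GTS σ₂ α) (s₂ : σ₂) : Prop :=
  ∃ H, IsMixedSim M₁ M₂ H ∧ H s₁ s₂

/-- A Kripke Structure viewed as a GTS: complete labelling, and must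
hypertransitions are exactly the singleton may transitions. -/
def IsKS (M : GTS σ α) : Prop :=
  (∀ s p, M.labT s p ∨ M.labF s p) ∧
  (∀ s A, M.must s A ↔ ∃ t, A = {t} ∧ M.may s t)

/-- A KMTS is a GTS whose must hypertransitions all have singleton targets. -/
def IsKMTS (M : GTS σ α) : Prop :=
  ∀ s A, M.must s A → ∃ t, A = ({t} : Set σ)

/-- Closed fixpoint-free modal formulas. -/
inductive Form (α : Type) : Type
  | tt | ff
  | lit (p : α) | nlit (p : α)
  | and (φ ψ : Form α) | or (φ ψ : Form α)
  | dia (φ : Form α) | box (φ : Form α)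

/-- SIS truth set. -/
def sisT (M : GTS σ α) : Form α → Set σ
  | .tt => Set.univ
  | .ff => ∅
  | .lit p => {s | M.labT s p}
  | .nlit p => {s | M.labF s p}
  | .and φ ψ => sisT M φ ∩ sisT M ψ
  | .or φ ψ => sisT M φ ∪ sisT M ψ
  | .dia φ => {s | ∃ A, M.must s A ∧ A ⊆ sisT M φ}
  | .box φ => {s | ∀ t, M.may s t → t ∈ sisT M φ}

/-- SIS falsity set. -/
def sisF (M : GTS σ α) : Form α → Set σ
  | .tt => ∅
  | .ff => Set.univ
  | .lit p => {s | M.labF s p}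
  | .nlit p => {s | M.labT s p}
  | .and φ ψ => sisF M φ ∪ sisF M ψ
  | .or φ ψ => sisF M φ ∩ sisF M ψ
  | .dia φ => {s | ∀ t, M.may s t → t ∈ sisF M φ}
  | .box φ => {s | ∃ A, M.must s A ∧ A ⊆ sisF M φ}

/-- Soundness of mixed simulation for SIS (fixpoint-free fragment): if
`⟨K,s_K⟩ ≤_mix ⟨M,s_M⟩` with `K` a Kripke Structure, then SIS truth at `s_M`
implies truth at `s_K`, and SIS falsity at `s_M` implies non-truth at `s_K`. -/
theorem mixedSim_sound (σ τ α : Type) (K : GTS τ α) (hK : IsKS K) (M : GTS σ α)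
    (sK : τ) (sM : σ) (h : MixLe K sK M sM) (φ : Form α) :
    (sM ∈ sisT M φ → sK ∈ sisT K φ) ∧ (sM ∈ sisF M φ → sK ∉ sisT K φ) := by
  obtain ⟨H, hSim, hH⟩ := h
  induction φ generalizing sK sM with
  | tt =>
    exact ⟨fun _ => trivial, fun h => absurd h (fun h => h)⟩
  | ff =>
    exact ⟨fun h => absurd h (fun h => h), fun _ h => h⟩
  | lit p =>
    obtain ⟨⟨hT, hF⟩, _, _⟩ := hSim sK sM hH
    exact ⟨fun h => hT p h, fun h h' => K.lab_con sK p ⟨h', hF p h⟩⟩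
  | nlit p =>
    obtain ⟨⟨hT, hF⟩, _, _⟩ := hSim sK sM hH
    exact ⟨fun h => hF p h, fun h h' => K.lab_con sK p ⟨hT p h, h'⟩⟩
  | and φ ψ ihφ ihψ =>
    refine ⟨fun h => ⟨(ihφ sK sM hH).1 h.1, (ihψ sK sM hH).1 h.2⟩, fun h h' => ?_⟩
    rcases h with h | h
    · exact (ihφ sK sM hH).2 h h'.1
    · exact (ihψ sK sM hH).2 h h'.2
  | or φ ψ ihφ ihψ =>
    refine ⟨fun h => ?_, fun h h' => ?_⟩
    · rcases h with h | h
      · exact Or.inl ((ihφ sK sM hH).1 h)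
      · exact Or.inr ((ihψ sK sM hH).1 h)
    · rcases h' with h' | h'
      · exact (ihφ sK sM hH).2 h.1 h'
      · exact (ihψ sK sM hH).2 h.2 h'
  | dia φ ih =>
    constructor
    · rintro ⟨A₂, hmust, hsub⟩
      obtain ⟨_, _, hmustSim⟩ := hSim sK sM hH
      obtain ⟨A₁, hmust₁, hmatch⟩ := hmustSim A₂ hmust
      obtain ⟨t, hAt, hmay⟩ := (hK.2 sK A₁).1 hmust₁
      obtain ⟨t₂, ht₂A, hHt⟩ := hmatch t (by rw [hAt]; rfl)
      refine ⟨A₁, hmust₁, ?_⟩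
      rw [hAt, Set.singleton_subset_iff]
      exact (ih t t₂ hHt).1 (hsub ht₂A)
    · rintro h ⟨A, hmustA, hsubA⟩
      obtain ⟨t, hAt, hmay⟩ := (hK.2 sK A).1 hmustA
      obtain ⟨_, hmaySim, _⟩ := hSim sK sM hH
      obtain ⟨t₂, hmay₂, hHt⟩ := hmaySim t hmay
      exact (ih t t₂ hHt).2 (h t₂ hmay₂) (hsubA (by rw [hAt]; rfl))
  | box φ ih =>
    constructor
    · intro h t hmay
      obtain ⟨_, hmaySim, _⟩ := hSim sK sM hH
      obtain ⟨t₂, hmay₂, hHt⟩ := hmaySim t hmay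
      exact (ih t t₂ hHt).1 (h t₂ hmay₂)
    · rintro ⟨A₂, hmust, hsub⟩ h'
      obtain ⟨_, _, hmustSim⟩ := hSim sK sM hH
      obtain ⟨A₁, hmust₁, hmatch⟩ := hmustSim A₂ hmust
      obtain ⟨t, hAt, hmay⟩ := (hK.2 sK A₁).1 hmust₁
      obtain ⟨t₂, ht₂A, hHt⟩ := hmatch t (by rw [hAt]; rfl)
      exact (ih t t₂ hHt).2 (hsub ht₂A) (h' t hmay)
end

section
/- Assuming thorough semantics, expressiveness containment implies relative completeness containment: if abstraction formalisms F₁ and F₂ (over the same class of concrete structures, each equipped with thorough semantics) satisfy F₁ ⊑_ex F₂, then compl(F₁) ⊆ compl(F₂). -/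
/-! Under thorough semantics abstract satisfaction depends only on the concretisation set, so an
`F₂`-model with the same concretisation set as an `F₁`-witness is again a witness. -/

set_option autoImplicit true

/-- An abstraction formalism over a fixed class of concrete model-states `Conc`,
a type of formulas `Form` and a concrete satisfaction relation `sat`:
a class of abstract model-states `Abs`, a refinement relation `ref` and an
abstract satisfaction relation `asat`. -/
structure Formalism (Conc : Type) (Form : Type) (sat : Conc → Form → Prop) where
  Abs : Type
  ref : Conc → Abs → Prop
  asat : Abs → Form → Prop

/-- The concretisation set of an abstract model-state. -/
def concSet {Conc Form : Type} {sat : Conc → Form → Prop}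
    (F : Formalism Conc Form sat) (a : F.Abs) : Set Conc := {c | F.ref c a}

/-- `F` uses thorough semantics. -/
def Thorough {Conc Form : Type} {sat : Conc → Form → Prop}
    (F : Formalism Conc Form sat) : Prop :=
  ∀ a φ, F.asat a φ ↔ ∀ c ∈ concSet F a, sat c φ

/-- `F₂` is at least as expressive as `F₁`. -/
def ExLe {Conc Form : Type} {sat : Conc → Form → Prop}
    (F₁ F₂ : Formalism Conc Form sat) : Prop :=
  ∀ a₁ : F₁.Abs, ∃ a₂ : F₂.Abs, concSet F₁ a₁ = concSet F₂ a₂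

/-- The completeness set of `F`: satisfiable formulas provable on every concrete
model-state satisfying them via some abstraction in `F`. -/
def complSet {Conc Form : Type} {sat : Conc → Form → Prop}
    (F : Formalism Conc Form sat) : Set Form :=
  {φ | (∃ c, sat c φ) ∧ ∀ c, sat c φ → ∃ a, F.ref c a ∧ F.asat a φ}

theorem Thorough.asat_iff_of_concSet_eq {Conc Form : Type} {sat : Conc → Form → Prop}
    {F₁ F₂ : Formalism Conc Form sat} (h₁ : Thorough F₁) (h₂ : Thorough F₂)
    {a₁ : F₁.Abs} {a₂ : F₂.Abs} (heq : concSet F₁ a₁ = concSet F₂ a₂) (φ : Form) :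
    F₁.asat a₁ φ ↔ F₂.asat a₂ φ := by
  rw [h₁, h₂, heq]

/-- Assuming thorough semantics, expressiveness containment implies relative
completeness containment. -/
theorem exLe_implies_complLe {Conc Form : Type} {sat : Conc → Form → Prop}
    (F₁ F₂ : Formalism Conc Form sat)
    (h₁ : Thorough F₁) (h₂ : Thorough F₂) (hex : ExLe F₁ F₂) :
    complSet F₁ ⊆ complSet F₂ := by
  rintro φ ⟨hsatisfiable, hcompl⟩
  refine ⟨hsatisfiable, fun c hc => ?_⟩
  obtain ⟨a₁, href, hasat⟩ := hcompl c hc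
  obtain ⟨a₂, heq⟩ := hex a₁
  have href₂ : c ∈ concSet F₂ a₂ := heq ▸ href
  exact ⟨a₂, href₂, (h₁.asat_iff_of_concSet_eq h₂ heq φ).1 hasat⟩
end

section
/- Finitely-initial Kripke Structures admit finite GTS abstractions proving reachability: for every Kripke Structure K with finitely many initial states that are all finitely reachable to a P-labelled state (every initial state satisfies μX. P ∨ ◇X), there exists a finite KMTS M and a mixed simulation witnessing K ≤_mix M such that every initial state of M satisfies μX. P ∨ ◇X under the standard inductive semantics. Concretely, letting n be the maximum over initial states of the minimal path length to a P-state, the KMTS with states {0, 1, ..., n, ⊤*}, must transitions k+1 → k for k < n, may transitions from every state to every state, P-label exactly on state 0, works: the map sending each concrete state s with steps(s) = k ≤ n to state k and all other states to ⊤* induces a mixed simulation, and each state k ≤ n satisfies the formula. -/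
set_option autoImplicit true
set_option maxHeartbeats 800000

/-- The SIS operator for `μX. P ∨ ◇X` on a GTS: truth of `◇` uses must
hypertransitions (for a Kripke Structure, where must transitions are the
singleton may transitions, this is the standard semantics). -/
def diaOp {σ α : Type} (M : GTS σ α) (p : α) : Set σ →o Set σ :=
  ⟨fun U => {s | M.labT s p} ∪ {s | ∃ A, M.must s A ∧ A ⊆ U}, by
    intro U V h x hx
    rcases hx with hx | ⟨A, hA, hsub⟩
    · exact Or.inl hx
    · exact Or.inr ⟨A, hA, hsub.trans h⟩⟩

/-- Every Kripke Structure with finitely many initial states, all of which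
satisfy `μX. P ∨ ◇X`, admits a finite KMTS abstraction that mixed-simulates it
and whose initial states all satisfy `μX. P ∨ ◇X` under SIS. -/
theorem finite_abstraction_for_reachability (σ α : Type) (K : GTS σ α)
    (hK : IsKS K) (p : α) (hfin : K.init.Finite)
    (hsat : ∀ s ∈ K.init, s ∈ OrderHom.lfp (diaOp K p)) :
    ∃ (τ : Type) (_ : Fintype τ) (M : GTS τ α), IsKMTS M ∧
      (∃ H, IsMixedSim K M H ∧ ∀ s ∈ K.init, ∃ t ∈ M.init, H s t) ∧
      (∀ t ∈ M.init, t ∈ OrderHom.lfp (diaOp M p)) := by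
  classical
  set f : Set σ → Set σ := ⇑(diaOp K p) with hf
  have hfempty : f ∅ = {s | K.labT s p} := by
    apply Set.Subset.antisymm
    · rintro s (hs | ⟨A, hA, hsub⟩)
      · exact hs
      · rcases (hK.2 s A).mp hA with ⟨t, rfl, _⟩
        exact absurd (hsub rfl) (Set.notMem_empty t)
    · intro s hs; exact Or.inl hs
  have hstep : ∀ k, f^[k] ∅ ⊆ f^[k+1] ∅ := by
    intro k
    induction k with
    | zero => simp
    | succ k ih =>
      rw [Function.iterate_succ_apply', Function.iterate_succ_apply']
      exact (diaOp K p).mono ih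
  have hmono : ∀ {j k : ℕ}, j ≤ k → f^[j] ∅ ⊆ f^[k] ∅ := by
    intro j k hjk
    induction hjk with
    | refl => exact le_refl _
    | step h ih => exact ih.trans (hstep _)
  have hlfp : OrderHom.lfp (diaOp K p) ≤ ⋃ k, f^[k] ∅ := by
    apply OrderHom.lfp_le
    rintro s (hs | ⟨A, hA, hsub⟩)
    · refine Set.mem_iUnion.mpr ⟨1, ?_⟩
      rw [Function.iterate_one, hfempty]; exact hs
    · rcases (hK.2 s A).mp hA with ⟨t, rfl, hmay⟩
      rcases Set.mem_iUnion.mp (hsub rfl) with ⟨k, hk⟩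
      refine Set.mem_iUnion.mpr ⟨k+1, ?_⟩
      rw [Function.iterate_succ_apply']
      exact Or.inr ⟨{t}, (hK.2 s {t}).mpr ⟨t, rfl, hmay⟩, by
        intro x hx; rw [Set.mem_singleton_iff] at hx; subst hx; exact hk⟩
  have hex : ∀ s, ∃ k, s ∈ K.init → s ∈ f^[k] ∅ := by
    intro s
    by_cases hs : s ∈ K.init
    · rcases Set.mem_iUnion.mp (hlfp (hsat s hs)) with ⟨k, hk⟩
      exact ⟨k, fun _ => hk⟩
    · exact ⟨0, fun h => absurd h hs⟩
  choose g hg using hex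
  set n := hfin.toFinset.sup g with hn
  have hgn : ∀ s ∈ K.init, g s ≤ n := fun s hs =>
    Finset.le_sup (hfin.mem_toFinset.mpr hs)
  refine ⟨Option (Fin n), inferInstance,
    { init := Set.range some
      may := fun _ _ => True
      must := fun t A => ∃ k j : Fin n, t = some k ∧ (j : ℕ) + 1 = (k : ℕ) ∧ A = {some j}
      labT := fun t q => q = p ∧ ∃ k : Fin n, t = some k ∧ (k : ℕ) = 0
      labF := fun _ _ => False
      must_may := fun _ _ _ _ _ => trivial
      lab_con := fun s q h => h.2 }, ?_, ?_, ?_⟩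
  · rintro t A ⟨k, j, _, _, rfl⟩
    exact ⟨some j, rfl⟩
  · refine ⟨fun s t => t = none ∨
      ∃ k : Fin n, t = some k ∧ s ∈ f^[(k:ℕ)+1] ∅ ∧ s ∉ f^[(k:ℕ)] ∅, ?_, ?_⟩
    · intro s t hH
      refine ⟨⟨?_, ?_⟩, ?_, ?_⟩
      · rintro q ⟨rfl, k, rfl, hk0⟩
        rcases hH with h | ⟨k', hk', hs1, hs0⟩
        · exact absurd h (Option.some_ne_none k)
        · obtain rfl : k = k' := Option.some.inj hk'
          rw [hk0] at hs1
          rw [Function.iterate_one, hfempty] at hs1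
          exact hs1
      · intro q h; exact h.elim
      · intro s' _; exact ⟨none, trivial, Or.inl rfl⟩
      · rintro A ⟨k, j, ht, hjk, rfl⟩
        subst ht
        rcases hH with h | ⟨k', hk', hs1, hs0⟩
        · exact absurd h (Option.some_ne_none k)
        · obtain rfl : k = k' := Option.some.inj hk'
          have hk : (k : ℕ) = (j : ℕ) + 1 := hjk.symm
          have hs1' : s ∈ f (f^[(j:ℕ)+1] ∅) := by
            rw [hk, Function.iterate_succ_apply'] at hs1
            exact hs1
          rcases hs1' with hlab | ⟨A, hA, hsub⟩
          · refine absurd (hmono (by omega : 1 ≤ (k:ℕ)) ?_) hs0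
            rw [Function.iterate_one, hfempty]; exact hlab
          · rcases (hK.2 s A).mp hA with ⟨u, rfl, hmay⟩
            have hu1 : u ∈ f^[(j:ℕ)+1] ∅ := hsub rfl
            have hu0 : u ∉ f^[(j:ℕ)] ∅ := by
              intro hu
              apply hs0
              rw [hk, Function.iterate_succ_apply']
              exact Or.inr ⟨{u}, hA, by
                intro x hx; rw [Set.mem_singleton_iff] at hx; subst hx; exact hu⟩
            refine ⟨{u}, hA, ?_⟩
            intro s' hs'
            rw [Set.mem_singleton_iff] at hs'; subst hs'
            exact ⟨some j, rfl, Or.inr ⟨j, rfl, hu1, hu0⟩⟩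
    · intro s hs
      have hexm : ∃ m, s ∈ f^[m] ∅ := ⟨g s, hg s hs⟩
      have hms : s ∈ f^[Nat.find hexm] ∅ := Nat.find_spec hexm
      have hm1 : 1 ≤ Nat.find hexm := by
        rcases Nat.eq_zero_or_pos (Nat.find hexm) with h0 | h1
        · rw [h0] at hms; simp at hms
        · exact h1
      have hmn : Nat.find hexm ≤ n := (Nat.find_min' hexm (hg s hs)).trans (hgn s hs)
      have hlt : Nat.find hexm - 1 < n := by omega
      refine ⟨some ⟨Nat.find hexm - 1, hlt⟩, ⟨_, rfl⟩,
        Or.inr ⟨⟨Nat.find hexm - 1, hlt⟩, rfl, ?_, ?_⟩⟩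
      · show s ∈ f^[Nat.find hexm - 1 + 1] ∅
        have h : Nat.find hexm - 1 + 1 = Nat.find hexm := by omega
        rw [h]; exact hms
      · show s ∉ f^[Nat.find hexm - 1] ∅
        exact Nat.find_min hexm (by omega)
  · rintro t ⟨k, rfl⟩
    have key : ∀ m : ℕ, ∀ k : Fin n, (k : ℕ) = m →
        some k ∈ OrderHom.lfp (diaOp
          { init := Set.range some
            may := fun _ _ => True
            must := fun t A => ∃ k j : Fin n, t = some k ∧ (j : ℕ) + 1 = (k : ℕ) ∧ A = {some j}
            labT := fun t q => q = p ∧ ∃ k : Fin n, t = some k ∧ (k : ℕ) = 0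
            labF := fun _ _ => False
            must_may := fun _ _ _ _ _ => trivial
            lab_con := fun s q h => h.2 } p) := by
      intro m
      induction m using Nat.strong_induction_on with
      | _ m ih =>
        intro k hk
        rw [← OrderHom.map_lfp]
        rcases Nat.eq_zero_or_pos m with h0 | hpos
        · exact Or.inl ⟨rfl, k, rfl, by omega⟩
        · have hj : m - 1 < n := by omega
          refine Or.inr ⟨{some ⟨m-1, hj⟩}, ⟨k, ⟨m-1, hj⟩, rfl,
            show m - 1 + 1 = (k : ℕ) by omega, rfl⟩, ?_⟩
          intro t' ht'
          rw [Set.mem_singleton_iff] at ht'; subst ht'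
          exact ih (m-1) (by omega) _ rfl
    exact key k k rfl
end

section
/- No finite GTS can prove termination of the infinitely-branching counter system: let K be the Kripke Structure with states ℕ × ℕ ∪ {init} (empty labelling), where init has a transition to (n, n) for every n ∈ ℕ, and (n, k+1) has a transition to (n, k), and (n,0) is deadlocked. Then ⟨K, init⟩ satisfies μX. □X (all paths terminate), but for every finite GTS M with ⟨K, init⟩ ≤_mix ⟨M, s_M⟩, the state s_M does not satisfy μX. □X under the standard inductive semantics. -/
set_option autoImplicit true
set_option maxHeartbeats 800000

/-- The monotone operator `U ↦ {s | ∀ t, s R t → t ∈ U}` whose least fixpoint is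
the semantics of `μX. □X`. -/
def boxOp {σ : Type} (R : σ → σ → Prop) : Set σ →o Set σ :=
  ⟨fun U => {s | ∀ t, R s t → t ∈ U}, by
    intro U V h s hs t ht; exact h (hs t ht)⟩

/-- The transition relation of the infinitely-branching counter system:
`init` (i.e. `none`) steps to `(n, n)` for every `n`, and `(n, k+1)` steps to
`(n, k)`; `(n, 0)` is deadlocked. -/
def cmay : Option (ℕ × ℕ) → Option (ℕ × ℕ) → Prop
  | none, some (n, m) => n = m
  | some (n, k), some (n', k') => n' = n ∧ k = k' + 1
  | _, _ => False

/-- The counter system as a Kripke Structure (empty labelling). -/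
def CK : GTS (Option (ℕ × ℕ)) Empty where
  init := {none}
  may := cmay
  must x A := ∃ t, A = {t} ∧ cmay x t
  labT _ _ := False
  labF _ _ := False
  must_may := by
    rintro x A ⟨t, rfl, h⟩ u hu
    have : u = t := hu
    subst this; exact h
  lab_con := by rintro x p ⟨h, _⟩; exact h

/-- `n`-step reachability. -/
def stepn {σ : Type} (R : σ → σ → Prop) : ℕ → σ → σ → Prop
  | 0, s, t => s = t
  | (n+1), s, t => ∃ u, R s u ∧ stepn R n u t

lemma mem_lfp_boxOp_acc {σ : Type} (R : σ → σ → Prop) {s : σ}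
    (h : s ∈ OrderHom.lfp (boxOp R)) : Acc (fun a b => R b a) s := by
  have hpre : boxOp R {s | Acc (fun a b => R b a) s} ≤ {s | Acc (fun a b => R b a) s} := by
    intro x hx
    exact Acc.intro x (fun y hy => hx y hy)
  exact OrderHom.lfp_le (boxOp R) hpre h

lemma acc_bound {τ : Type} [Finite τ] (R : τ → τ → Prop) :
    ∀ s : τ, Acc (fun a b => R b a) s → ∃ N, ∀ n t, stepn R n s t → n ≤ N := by
  classical
  have := Fintype.ofFinite τ
  intro s hs
  induction hs with
  | intro s _ ih =>
    choose! g hg using ih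
    refine ⟨(Finset.univ.sup g) + 1, ?_⟩
    intro n t hstep
    cases n with
    | zero => omega
    | succ k =>
      obtain ⟨u, hRu, hrest⟩ := hstep
      have hk : k ≤ g u := hg u hRu k t hrest
      have : g u ≤ Finset.univ.sup g := Finset.le_sup (Finset.mem_univ u)
      omega

lemma sim_stepn {τ : Type} (M : GTS τ Empty) (H : Option (ℕ × ℕ) → τ → Prop)
    (hsim : IsMixedSim CK M H) :
    ∀ n s₁ s₂, H s₁ s₂ → ∀ t₁, stepn cmay n s₁ t₁ →
      ∃ t₂, stepn M.may n s₂ t₂ ∧ H t₁ t₂ := by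
  intro n
  induction n with
  | zero => intro s₁ s₂ hH t₁ hst; cases hst; exact ⟨s₂, rfl, hH⟩
  | succ k ihn =>
    intro s₁ s₂ hH t₁ hst
    obtain ⟨u, hRu, hrest⟩ := hst
    obtain ⟨u₂, hRu₂, hHu⟩ := (hsim s₁ s₂ hH).2.1 u hRu
    obtain ⟨t₂, hst₂, hHt⟩ := ihn u u₂ hHu t₁ hrest
    exact ⟨t₂, ⟨u₂, hRu₂, hst₂⟩, hHt⟩

lemma ck_stepn (n : ℕ) : ∀ k, stepn cmay k (some (n, k)) (some (n, 0)) := by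
  intro k
  induction k with
  | zero => rfl
  | succ m ih => exact ⟨some (n, m), ⟨rfl, rfl⟩, ih⟩

lemma ck_stepn_init (n : ℕ) : stepn cmay (n + 1) none (some (n, 0)) :=
  ⟨some (n, n), rfl, ck_stepn n n⟩

lemma ck_mem_lfp : ∀ k n : ℕ, some (n, k) ∈ OrderHom.lfp (boxOp CK.may) := by
  intro k
  induction k with
  | zero =>
    intro n
    rw [← OrderHom.map_lfp (boxOp CK.may)]
    rintro (_ | ⟨n', k'⟩) ht
    · exact absurd ht id
    · exact absurd ht.2 (by omega)
  | succ m ih =>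
    intro n
    rw [← OrderHom.map_lfp (boxOp CK.may)]
    rintro (_ | ⟨n', k'⟩) ht
    · exact absurd ht id
    · obtain ⟨h1, h2⟩ := ht
      have : k' = m := by omega
      subst h1; subst this
      exact ih _

/-- `⟨CK, init⟩` satisfies `μX. □X`, but no finite GTS abstraction of it
satisfies `μX. □X` under the standard inductive semantics. -/
theorem no_finite_gts_proves_termination :
    none ∈ OrderHom.lfp (boxOp CK.may) ∧
    ∀ (τ : Type), Finite τ → ∀ (M : GTS τ Empty) (sM : τ),
      MixLe CK none M sM → sM ∉ OrderHom.lfp (boxOp M.may) := by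
  constructor
  · rw [← OrderHom.map_lfp (boxOp CK.may)]
    rintro (_ | ⟨n, m⟩) ht
    · exact absurd ht id
    · have : n = m := ht
      subst this
      exact ck_mem_lfp _ _
  · intro τ hfin M sM ⟨H, hsim, hH⟩ hmem
    have hacc := mem_lfp_boxOp_acc M.may hmem
    obtain ⟨N, hN⟩ := acc_bound M.may sM hacc
    obtain ⟨t₂, hst₂, _⟩ :=
      sim_stepn M H hsim (N + 1) none sM hH (some (N, 0)) (ck_stepn_init N)
    have := hN (N + 1) t₂ hst₂
    omega
end
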